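/- arXiv:1207.5116 — 8 statements merged into one kernel-verified Lean document; each statement's English description precedes it below -/
import Mathlib

section
/- Let G₁, G₂ be finite connected graphs and G = G₁ □ G₂ their Cartesian product. Then for any x = (x₁,x₂), y = (y₁,y₂), z = (z₁,z₂) in V₁ × V₂ and any t ∈ [0,1], the binomial interpolation tensorises: ν_t^{x,y}(z) = ν_t^{x₁,y₁}(z₁) · ν_t^{x₂,y₂}(z₂). -/
open scoped Classical

/-- The number of geodesics (walks of minimal length) from `x` to `y` in `G`. -/
noncomputable def SimpleGraph.numGeodesics {V : Type*} [Fintype V]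
    (G : SimpleGraph V) (x y : V) : ℕ :=
  (G.finsetWalkLength (G.dist x y) x y).card

/-- The number of geodesics from `x` to `y` in `G` that pass through `z`. -/
noncomputable def SimpleGraph.numGeodesicsThrough {V : Type*} [Fintype V]
    (G : SimpleGraph V) (x z y : V) : ℕ :=
  ((G.finsetWalkLength (G.dist x y) x y).filter (fun p => z ∈ p.support)).card

/-- The binomial interpolation `ν_t^{x,y}(z)`: it equals
`C(d(x,y), d(x,z)) t^{d(x,z)} (1-t)^{d(z,y)} |Γ(x,z,y)|/|Γ(x,y)|` when `z` lies on some
geodesic from `x` to `y` (i.e. `d(x,z) + d(z,y) = d(x,y)`), and `0` otherwise. -/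
noncomputable def SimpleGraph.binomInterp {V : Type*} [Fintype V]
    (G : SimpleGraph V) (t : ℝ) (x y z : V) : ℝ :=
  if G.dist x z + G.dist z y = G.dist x y then
    (Nat.choose (G.dist x y) (G.dist x z) : ℝ) * t ^ (G.dist x z) * (1 - t) ^ (G.dist z y)
      * (G.numGeodesicsThrough x z y : ℝ) / (G.numGeodesics x y : ℝ)
  else 0

/-! Distances add in a box product, so `z` lies on a geodesic from `x` to `y` exactly when each
`zᵢ` lies on a geodesic from `xᵢ` to `yᵢ`. Walks in `G₁ □ G₂` are counted by powers of the
Kronecker sum `A₁ ⊗ 1 + 1 ⊗ A₂` of the adjacency matrices, whose binomial expansion shows that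
a geodesic of `G₁ □ G₂` is a shuffle of geodesics of `G₁` and `G₂`:
`|Γ(x,y)| = C(d₁+d₂, d₁) |Γ(x₁,y₁)| |Γ(x₂,y₂)|`. Cutting geodesics at `z` gives
`|Γ(x,z,y)| = |Γ(x,z)| |Γ(z,y)|`. With `aᵢ = d(xᵢ,zᵢ)`, `bᵢ = d(zᵢ,yᵢ)`, `a = a₁+a₂`,
`b = b₁+b₂`, what remains is
`C(a+b, a) C(a, a₁) C(b, b₁) = C(a+b, a₁+b₁) C(a₁+b₁, a₁) C(a₂+b₂, a₂)`,
both sides being the multinomial coefficient of `(a₁, a₂, b₁, b₂)`. -/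

open scoped Kronecker

open Finset in
theorem Matrix.kroneckerSum_pow {R m n : Type*} [CommSemiring R] [Fintype m] [Fintype n]
    [DecidableEq m] [DecidableEq n] (A : Matrix m m R) (B : Matrix n n R) (k : ℕ) :
    (A ⊗ₖ 1 + 1 ⊗ₖ B) ^ k = ∑ i ∈ antidiagonal k, k.choose i.1 • (A ^ i.1) ⊗ₖ (B ^ i.2) := by
  have hcomm : Commute (A ⊗ₖ 1) (1 ⊗ₖ B) := by
    simp only [Commute, SemiconjBy, ← Matrix.mul_kronecker_mul, mul_one, one_mul]
  have hpowA : ∀ i, (A ⊗ₖ 1) ^ i = (A ^ i) ⊗ₖ (1 : Matrix n n R) := by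
    intro i
    induction i with
    | zero => simp
    | succ i ih => rw [pow_succ, ih, ← Matrix.mul_kronecker_mul, pow_succ, mul_one]
  have hpowB : ∀ j, ((1 : Matrix m m R) ⊗ₖ B) ^ j = 1 ⊗ₖ (B ^ j) := by
    intro j
    induction j with
    | zero => simp
    | succ j ih => rw [pow_succ, ih, ← Matrix.mul_kronecker_mul, pow_succ, mul_one]
  simp only [hcomm.add_pow', hpowA, hpowB, ← Matrix.mul_kronecker_mul, mul_one, one_mul]

theorem Nat.add_add_choose_mul_choose_mul_choose_comm (a₁ a₂ b₁ b₂ : ℕ) :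
    (a₁ + a₂ + (b₁ + b₂)).choose (a₁ + a₂) * (a₁ + a₂).choose a₁ * (b₁ + b₂).choose b₁ =
      (a₁ + b₁ + (a₂ + b₂)).choose (a₁ + b₁) * (a₁ + b₁).choose a₁ * (a₂ + b₂).choose a₂ := by
  rw [← Nat.cast_inj (R := ℚ)]
  push_cast
  simp only [Nat.cast_add_choose]
  rw [show a₁ + b₁ + (a₂ + b₂) = a₁ + a₂ + (b₁ + b₂) by ring]
  field_simp

namespace SimpleGraph

variable {V V₁ V₂ : Type*}

namespace Walk

variable {G : SimpleGraph V}

lemma length_takeUntil_add_length_dropUntil [DecidableEq V] {x y z : V} (p : G.Walk x y)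
    (hz : z ∈ p.support) : (p.takeUntil z hz).length + (p.dropUntil z hz).length = p.length := by
  rw [← length_append, p.take_spec hz]

lemma IsPath.takeUntil_end [DecidableEq V] {u v : V} {p : G.Walk u v} (hp : p.IsPath) :
    p.takeUntil v p.end_mem_support = p := by
  induction p with
  | nil => rfl
  | @cons u w v h p ih =>
    rw [cons_isPath_iff] at hp
    have hne : u ≠ v := fun e => hp.2 (e ▸ p.end_mem_support)
    rw [takeUntil_cons p.end_mem_support hne, ih hp.1]

lemma append_left_cancel {u v w : V} {p : G.Walk u v} {q q' : G.Walk v w}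
    (h : p.append q = p.append q') : q = q' := by
  induction p with
  | nil => simpa using h
  | cons _ _ ih => exact ih (by simpa using h)

end Walk

lemma natCard_walk_length_eq_zero_of_lt_dist {G : SimpleGraph V} {u v : V} {n : ℕ}
    (h : n < G.dist u v) : Nat.card {p : G.Walk u v // p.length = n} = 0 :=
  Nat.card_eq_zero.2 (.inl ⟨fun p => (G.dist_le p.1).not_gt (by rwa [p.2])⟩)

variable {G₁ : SimpleGraph V₁} {G₂ : SimpleGraph V₂}

lemma dist_boxProd {x y : V₁ × V₂} (h₁ : G₁.Reachable x.1 y.1) (h₂ : G₂.Reachable x.2 y.2) :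
    (G₁ □ G₂).dist x y = G₁.dist x.1 y.1 + G₂.dist x.2 y.2 := by
  have h : (G₁ □ G₂).Reachable x y := reachable_boxProd.2 ⟨h₁, h₂⟩
  exact_mod_cast (by rw [h.coe_dist_eq_edist, h₁.coe_dist_eq_edist, h₂.coe_dist_eq_edist,
    edist_boxProd] : ((G₁ □ G₂).dist x y : ℕ∞) = G₁.dist x.1 y.1 + G₂.dist x.2 y.2)

theorem adjMatrix_boxProd {α : Type*} [NonAssocSemiring α]
    (G : SimpleGraph V₁) (H : SimpleGraph V₂) :
    (G □ H).adjMatrix α = G.adjMatrix α ⊗ₖ 1 + 1 ⊗ₖ H.adjMatrix α := by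
  ext ⟨a, b⟩ ⟨c, d⟩
  by_cases hac : a = c <;> by_cases hbd : b = d <;> simp [adjMatrix_apply, hac, hbd]

open Finset in
theorem natCard_walk_length_boxProd [Fintype V₁] [Fintype V₂]
    (G : SimpleGraph V₁) (H : SimpleGraph V₂) (n : ℕ) (x y : V₁ × V₂) :
    Nat.card {p : (G □ H).Walk x y // p.length = n} = ∑ k ∈ antidiagonal n, n.choose k.1 *
      Nat.card {p : G.Walk x.1 y.1 // p.length = k.1} *
      Nat.card {p : H.Walk x.2 y.2 // p.length = k.2} := by
  have := (G □ H).adjMatrix_pow_apply_eq_card_walk (α := ℕ) n x y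
  simp only [adjMatrix_boxProd, Matrix.kroneckerSum_pow, Matrix.sum_apply, Matrix.smul_apply,
    Matrix.kroneckerMap_apply, adjMatrix_pow_apply_eq_card_walk, ← Nat.card_eq_fintype_card,
    Set.coe_ofPred, Nat.cast_id, smul_eq_mul] at this
  simpa only [mul_assoc] using this.symm

variable [Fintype V] (G : SimpleGraph V)

lemma numGeodesics_eq_natCard (x y : V) :
    G.numGeodesics x y = Nat.card {p : G.Walk x y // p.length = G.dist x y} := by
  rw [numGeodesics, ← card_set_walk_length_eq, ← Nat.card_eq_fintype_card, Set.coe_ofPred]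

lemma numGeodesicsThrough_eq_natCard (x z y : V) :
    G.numGeodesicsThrough x z y =
      Nat.card {p : G.Walk x y // p.length = G.dist x y ∧ z ∈ p.support} := by
  rw [numGeodesicsThrough, ← Nat.card_eq_finsetCard]
  exact Nat.card_congr (Equiv.subtypeEquivRight fun p => by simp [mem_finsetWalkLength_iff])

variable {G}

lemma numGeodesics_pos {x y : V} (h : G.Reachable x y) : 0 < G.numGeodesics x y := by
  obtain ⟨p, hp⟩ := h.exists_walk_length_eq_dist
  exact Finset.card_pos.mpr ⟨p, mem_finsetWalkLength_iff.mpr hp⟩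

theorem numGeodesicsThrough_eq_mul {x z y : V} (h : G.dist x z + G.dist z y = G.dist x y) :
    G.numGeodesicsThrough x z y = G.numGeodesics x z * G.numGeodesics z y := by
  have hsplit : ∀ (p : G.Walk x y) (hp : p.length = G.dist x y) (hz : z ∈ p.support),
      (p.takeUntil z hz).length = G.dist x z ∧ (p.dropUntil z hz).length = G.dist z y := by
    intro p hp hz
    have := p.length_takeUntil_add_length_dropUntil hz
    have := G.dist_le (p.takeUntil z hz)
    have := G.dist_le (p.dropUntil z hz)
    omega
  rw [numGeodesicsThrough_eq_natCard, numGeodesics_eq_natCard, numGeodesics_eq_natCard,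
    ← Nat.card_prod]
  refine Nat.card_congr
    { toFun w := (⟨w.1.takeUntil z w.2.2, (hsplit w.1 w.2.1 w.2.2).1⟩,
        ⟨w.1.dropUntil z w.2.2, (hsplit w.1 w.2.1 w.2.2).2⟩)
      invFun pq := ⟨pq.1.1.append pq.2.1, by simp [pq.1.2, pq.2.2, h],
        Walk.support_subset_support_append_left _ _ pq.1.1.end_mem_support⟩
      left_inv w := Subtype.ext (w.1.take_spec w.2.2)
      right_inv := ?_ }
  rintro ⟨⟨p, hp⟩, ⟨q, hq⟩⟩
  have hz : z ∈ (p.append q).support :=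
    Walk.support_subset_support_append_left _ _ p.end_mem_support
  have htake : (p.append q).takeUntil z hz = p := by
    rw [Walk.takeUntil_append_of_mem_left _ _ p.end_mem_support,
      (p.isPath_of_length_eq_dist hp).takeUntil_end]
  have hdrop : (p.append q).dropUntil z hz = q := by
    have hspec := (p.append q).take_spec hz
    rw [htake] at hspec
    exact Walk.append_left_cancel hspec
  simp [htake, hdrop]

open Finset in
theorem numGeodesics_boxProd [Fintype V₁] [Fintype V₂] {x y : V₁ × V₂}
    (h₁ : G₁.Reachable x.1 y.1) (h₂ : G₂.Reachable x.2 y.2) :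
    (G₁ □ G₂).numGeodesics x y = (G₁.dist x.1 y.1 + G₂.dist x.2 y.2).choose (G₁.dist x.1 y.1) *
      G₁.numGeodesics x.1 y.1 * G₂.numGeodesics x.2 y.2 := by
  simp only [numGeodesics_eq_natCard, dist_boxProd h₁ h₂, natCard_walk_length_boxProd]
  refine sum_eq_single_of_mem (G₁.dist x.1 y.1, G₂.dist x.2 y.2)
    (HasAntidiagonal.mem_antidiagonal.2 rfl) fun k hk hne => ?_
  rw [HasAntidiagonal.mem_antidiagonal] at hk
  obtain hlt | hlt : k.1 < G₁.dist x.1 y.1 ∨ k.2 < G₂.dist x.2 y.2 := by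
    by_contra! hge
    exact hne (Prod.ext (by omega) (by omega))
  · rw [natCard_walk_length_eq_zero_of_lt_dist hlt, mul_zero, zero_mul]
  · rw [natCard_walk_length_eq_zero_of_lt_dist hlt, mul_zero]

theorem binomInterp_of_dist_add_dist_eq (G : SimpleGraph V) (t : ℝ) {x y z : V}
    (h : G.dist x z + G.dist z y = G.dist x y) :
    G.binomInterp t x y z = ((G.dist x z + G.dist z y).choose (G.dist x z) : ℝ) *
      t ^ G.dist x z * (1 - t) ^ G.dist z y *
      (G.numGeodesics x z * G.numGeodesics z y : ℕ) / G.numGeodesics x y := by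
  rw [binomInterp, if_pos h, numGeodesicsThrough_eq_mul h, h]

theorem binomInterp_boxProd_of_dist_add_dist_eq [Fintype V₁] [Fintype V₂]
    (h₁ : G₁.Connected) (h₂ : G₂.Connected) (t : ℝ) {x y z : V₁ × V₂}
    (hg₁ : G₁.dist x.1 z.1 + G₁.dist z.1 y.1 = G₁.dist x.1 y.1)
    (hg₂ : G₂.dist x.2 z.2 + G₂.dist z.2 y.2 = G₂.dist x.2 y.2) :
    (G₁ □ G₂).binomInterp t x y z =
      G₁.binomInterp t x.1 y.1 z.1 * G₂.binomInterp t x.2 y.2 z.2 := by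
  have hd (u v : V₁ × V₂) : (G₁ □ G₂).dist u v = G₁.dist u.1 v.1 + G₂.dist u.2 v.2 :=
    dist_boxProd (h₁.preconnected _ _) (h₂.preconnected _ _)
  have hg : (G₁ □ G₂).dist x z + (G₁ □ G₂).dist z y = (G₁ □ G₂).dist x y := by
    rw [hd, hd, hd]; omega
  have hN₁ := numGeodesics_pos (h₁.preconnected x.1 y.1)
  have hN₂ := numGeodesics_pos (h₂.preconnected x.2 y.2)
  rw [binomInterp_of_dist_add_dist_eq _ _ hg, binomInterp_of_dist_add_dist_eq _ _ hg₁,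
    binomInterp_of_dist_add_dist_eq _ _ hg₂, hd, hd,
    numGeodesics_boxProd (h₁.preconnected _ _) (h₂.preconnected _ _),
    numGeodesics_boxProd (h₁.preconnected _ _) (h₂.preconnected _ _),
    numGeodesics_boxProd (h₁.preconnected _ _) (h₂.preconnected _ _), ← hg₁, ← hg₂]
  set a₁ := G₁.dist x.1 z.1
  set a₂ := G₂.dist x.2 z.2
  set b₁ := G₁.dist z.1 y.1
  set b₂ := G₂.dist z.2 y.2
  have hchoose := congrArg (Nat.cast (R := ℝ)) (Nat.add_add_choose_mul_choose_mul_choose_comm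
    a₁ a₂ b₁ b₂)
  have hC : ((a₁ + b₁ + (a₂ + b₂)).choose (a₁ + b₁) : ℝ) ≠ 0 := by
    exact_mod_cast (Nat.choose_pos (by omega)).ne'
  push_cast at hchoose ⊢
  field_simp
  linear_combination t ^ (a₁ + a₂) * (1 - t) ^ (b₁ + b₂) * (G₁.numGeodesics x.1 z.1 : ℝ) *
    G₂.numGeodesics x.2 z.2 * G₁.numGeodesics z.1 y.1 * G₂.numGeodesics z.2 y.2 * hchoose

end SimpleGraph

theorem binomInterp_boxProd_general {V₁ V₂ : Type*} [Fintype V₁] [Fintype V₂]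
    (G₁ : SimpleGraph V₁) (G₂ : SimpleGraph V₂)
    (h₁ : G₁.Connected) (h₂ : G₂.Connected)
    (x y z : V₁ × V₂) (t : ℝ) :
    (G₁ □ G₂).binomInterp t x y z =
      G₁.binomInterp t x.1 y.1 z.1 * G₂.binomInterp t x.2 y.2 z.2 := by
  have hd (u v : V₁ × V₂) : (G₁ □ G₂).dist u v = G₁.dist u.1 v.1 + G₂.dist u.2 v.2 :=
    SimpleGraph.dist_boxProd (h₁.preconnected _ _) (h₂.preconnected _ _)
  have tri₁ := h₁.dist_triangle (u := x.1) (v := z.1) (w := y.1)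
  have tri₂ := h₂.dist_triangle (u := x.2) (v := z.2) (w := y.2)
  by_cases hg₁ : G₁.dist x.1 z.1 + G₁.dist z.1 y.1 = G₁.dist x.1 y.1
  swap
  · have hg : (G₁ □ G₂).dist x z + (G₁ □ G₂).dist z y ≠ (G₁ □ G₂).dist x y := by
      rw [hd, hd, hd]; omega
    simp only [SimpleGraph.binomInterp, if_neg hg, if_neg hg₁, zero_mul]
  by_cases hg₂ : G₂.dist x.2 z.2 + G₂.dist z.2 y.2 = G₂.dist x.2 y.2
  swap
  · have hg : (G₁ □ G₂).dist x z + (G₁ □ G₂).dist z y ≠ (G₁ □ G₂).dist x y := by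
      rw [hd, hd, hd]; omega
    simp only [SimpleGraph.binomInterp, if_neg hg, if_neg hg₂, mul_zero]
  exact SimpleGraph.binomInterp_boxProd_of_dist_add_dist_eq h₁ h₂ t hg₁ hg₂

/-- the binomial interpolation tensorises over the Cartesian (box)
product of two finite connected graphs. -/
theorem binomInterp_boxProd {V₁ V₂ : Type*} [Fintype V₁] [Fintype V₂]
    (G₁ : SimpleGraph V₁) (G₂ : SimpleGraph V₂)
    (h₁ : G₁.Connected) (h₂ : G₂.Connected)
    (x y z : V₁ × V₂) (t : ℝ) (ht : t ∈ Set.Icc (0 : ℝ) 1) :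
    (G₁ □ G₂).binomInterp t x y z =
      G₁.binomInterp t x.1 y.1 z.1 * G₂.binomInterp t x.2 y.2 z.2 :=
  binomInterp_boxProd_general G₁ G₂ h₁ h₂ x y z t
end

section
/- Let ν₀, ν₁ be probability measures on a finite set V, both absolutely continuous with respect to a probability measure μ with densities f₀ and f₁. With the Hamming cost d(x,y) = 1_{x≠y}, the weak transport cost satisfies T̃₂(ν₁|ν₀) = ∑_x [1 - f₁(x)/f₀(x)]₊² f₀(x) μ(x), where [a]₊ = max(a,0). -/
/-!
A kernel `p` pays `1 - p x x` at `x`, and since the mass `ν₀ x * p x x` that stays at `x` is at most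
`min (ν₀ x) (ν₁ x)`, the cost at `x` is at least `(ν₀ x - ν₁ x)₊ ^ 2 / ν₀ x`. The bound is attained by
the kernel that keeps as much mass in place as possible and spreads the excess `(ν₀ x - ν₁ x)₊`
over the sites with a deficit `(ν₁ y - ν₀ y)₊`, proportionally to that deficit.
-/

open Finset

theorem max_sub_sq_div_le_one_sub_sq_mul {a b t : ℝ} (ha : 0 ≤ a) (ht : t ≤ 1) (hab : a * t ≤ b) :
    max (a - b) 0 ^ 2 / a ≤ (1 - t) ^ 2 * a := by
  rcases ha.eq_or_lt with rfl | ha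
  · simp
  have hexcess : max (a - b) 0 ≤ a * (1 - t) := max_le (by linarith) (by nlinarith)
  rw [div_le_iff₀ ha]
  nlinarith [pow_le_pow_left₀ (le_max_right (a - b) 0) hexcess 2]

theorem max_one_sub_div_sq_mul_mul {a b m : ℝ} (ha : 0 ≤ a) (hm : 0 ≤ m) :
    max (1 - b / a) 0 ^ 2 * a * m = max (a * m - b * m) 0 ^ 2 / (a * m) := by
  rcases ha.eq_or_lt with rfl | ha
  · simp
  rcases hm.eq_or_lt with rfl | hm
  · simp
  have hscale : max (a * m - b * m) 0 = max (1 - b / a) 0 * (a * m) := by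
    rw [max_mul_of_nonneg _ _ (by positivity), zero_mul]
    field_simp
  rw [hscale]
  field_simp

noncomputable section HammingWeakTransport

variable {V : Type*} (ν₀ ν₁ : V → ℝ)

-- At `ν₀ x = 0` the division gives `0`, which is right: there is no mass at `x` to move.
def outflowFraction (x : V) : ℝ := max (ν₀ x - ν₁ x) 0 / ν₀ x

variable {ν₀ ν₁}

theorem outflowFraction_nonneg {x : V} (h₀ : 0 ≤ ν₀ x) : 0 ≤ outflowFraction ν₀ ν₁ x :=
  div_nonneg (le_max_right _ _) h₀

theorem outflowFraction_le_one {x : V} (h₀ : 0 ≤ ν₀ x) (h₁ : 0 ≤ ν₁ x) :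
    outflowFraction ν₀ ν₁ x ≤ 1 :=
  div_le_one_of_le₀ (max_le (by linarith) h₀) h₀

theorem mul_outflowFraction {x : V} (h₁ : 0 ≤ ν₁ x) :
    ν₀ x * outflowFraction ν₀ ν₁ x = max (ν₀ x - ν₁ x) 0 := by
  by_cases h : ν₀ x = 0
  · simp [h, h₁]
  · exact mul_div_cancel₀ _ h

variable [Fintype V]

theorem sum_max_sub_comm (h : ∑ x, ν₀ x = ∑ x, ν₁ x) :
    ∑ x, max (ν₁ x - ν₀ x) 0 = ∑ x, max (ν₀ x - ν₁ x) 0 := by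
  have hsplit : ∀ x, max (ν₁ x - ν₀ x) 0 = max (ν₀ x - ν₁ x) 0 + (ν₁ x - ν₀ x) := fun x => by
    rcases le_total (ν₀ x) (ν₁ x) with hx | hx
    · rw [max_eq_left (by linarith), max_eq_right (by linarith)]; ring
    · rw [max_eq_right (by linarith), max_eq_left (by linarith)]; ring
  simp_rw [hsplit]
  rw [sum_add_distrib, sum_sub_distrib, h, sub_self, add_zero]

variable (ν₀ ν₁) in
def inflowShare (y : V) : ℝ := max (ν₁ y - ν₀ y) 0 / ∑ z, max (ν₁ z - ν₀ z) 0

theorem inflowShare_nonneg (y : V) : 0 ≤ inflowShare ν₀ ν₁ y :=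
  div_nonneg (le_max_right _ _) (sum_nonneg fun _ _ => le_max_right _ _)

theorem sum_mul_inflowShare (y : V) :
    (∑ z, max (ν₁ z - ν₀ z) 0) * inflowShare ν₀ ν₁ y = max (ν₁ y - ν₀ y) 0 := by
  by_cases h : ∑ z, max (ν₁ z - ν₀ z) 0 = 0
  · rw [h, zero_mul, (sum_eq_zero_iff_of_nonneg fun _ _ => le_max_right _ _).1 h y (mem_univ y)]
  · exact mul_div_cancel₀ _ h

theorem outflowFraction_mul_sum_inflowShare (hmass : ∑ x, ν₀ x = ∑ x, ν₁ x) (x : V) :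
    outflowFraction ν₀ ν₁ x * ∑ y, inflowShare ν₀ ν₁ y = outflowFraction ν₀ ν₁ x := by
  by_cases h : ∑ z, max (ν₁ z - ν₀ z) 0 = 0
  · rw [sum_max_sub_comm hmass] at h
    simp [outflowFraction,
      (sum_eq_zero_iff_of_nonneg fun _ _ => le_max_right _ _).1 h x (mem_univ x)]
  · simp only [inflowShare, ← sum_div, div_self h, mul_one]

theorem outflowFraction_mul_inflowShare_self (x : V) :
    outflowFraction ν₀ ν₁ x * inflowShare ν₀ ν₁ x = 0 := by
  rcases le_total (ν₀ x) (ν₁ x) with h | h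
  · simp [outflowFraction, max_eq_right (sub_nonpos.2 h)]
  · simp [inflowShare, max_eq_right (sub_nonpos.2 h)]

variable [DecidableEq V]

variable (ν₀ ν₁) in
def hammingOptimalKernel (x y : V) : ℝ :=
  (if x = y then 1 - outflowFraction ν₀ ν₁ x else 0) +
    outflowFraction ν₀ ν₁ x * inflowShare ν₀ ν₁ y

theorem hammingOptimalKernel_nonneg (h₀ : ∀ x, 0 ≤ ν₀ x) (h₁ : ∀ x, 0 ≤ ν₁ x) (x y : V) :
    0 ≤ hammingOptimalKernel ν₀ ν₁ x y := by
  have hstay : 0 ≤ 1 - outflowFraction ν₀ ν₁ x := sub_nonneg.2 (outflowFraction_le_one (h₀ x) (h₁ x))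
  have hmove : 0 ≤ outflowFraction ν₀ ν₁ x * inflowShare ν₀ ν₁ y :=
    mul_nonneg (outflowFraction_nonneg (h₀ x)) (inflowShare_nonneg y)
  unfold hammingOptimalKernel
  split_ifs <;> linarith

theorem sum_hammingOptimalKernel (hmass : ∑ x, ν₀ x = ∑ x, ν₁ x) (x : V) :
    ∑ y, hammingOptimalKernel ν₀ ν₁ x y = 1 := by
  simp only [hammingOptimalKernel, sum_add_distrib, sum_ite_eq, mem_univ, if_true, ← mul_sum,
    outflowFraction_mul_sum_inflowShare hmass, sub_add_cancel]

theorem sum_mul_hammingOptimalKernel (h₁ : ∀ x, 0 ≤ ν₁ x) (hmass : ∑ x, ν₀ x = ∑ x, ν₁ x)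
    (y : V) : ∑ x, ν₀ x * hammingOptimalKernel ν₀ ν₁ x y = ν₁ y := by
  have hmoved : ∑ x, ν₀ x * (outflowFraction ν₀ ν₁ x * inflowShare ν₀ ν₁ y) =
      max (ν₁ y - ν₀ y) 0 := by
    simp only [← mul_assoc, ← sum_mul, mul_outflowFraction (h₁ _), ← sum_max_sub_comm hmass,
      sum_mul_inflowShare]
  simp only [hammingOptimalKernel, mul_add, sum_add_distrib, hmoved, mul_ite, mul_zero,
    sum_ite_eq', mem_univ, if_true, mul_sub, mul_one, mul_outflowFraction (h₁ y)]
  rcases le_total (ν₀ y) (ν₁ y) with h | h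
  · rw [max_eq_right (by linarith), max_eq_left (by linarith)]; ring
  · rw [max_eq_left (by linarith), max_eq_right (by linarith)]; ring

theorem hammingOptimalKernel_self (x : V) :
    hammingOptimalKernel ν₀ ν₁ x x = 1 - outflowFraction ν₀ ν₁ x := by
  simp [hammingOptimalKernel, outflowFraction_mul_inflowShare_self]

variable (ν₀) in
def hammingWeakCost (p : V → V → ℝ) : ℝ :=
  ∑ x, (∑ y, (if x = y then 0 else 1) * p x y) ^ 2 * ν₀ x

variable (ν₀ ν₁) in
def hammingWeakCosts : Set ℝ :=
  {c | ∃ p : V → V → ℝ, (∀ x y, 0 ≤ p x y) ∧ (∀ x, ∑ y, p x y = 1) ∧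
    (∀ y, ∑ x, ν₀ x * p x y = ν₁ y) ∧ c = hammingWeakCost ν₀ p}

theorem sum_hamming_mul_eq_one_sub {p : V → V → ℝ} {x : V} (hp : ∑ y, p x y = 1) :
    ∑ y, (if x = y then (0 : ℝ) else 1) * p x y = 1 - p x x := by
  have hterm : ∀ y, (if x = y then (0 : ℝ) else 1) * p x y = p x y - if x = y then p x y else 0 :=
    fun y => by split_ifs <;> simp
  simp only [hterm, sum_sub_distrib, sum_ite_eq, mem_univ, if_true, hp]

theorem sum_max_sub_sq_div_le_hammingWeakCost (h₀ : ∀ x, 0 ≤ ν₀ x) {p : V → V → ℝ}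
    (hp : ∀ x y, 0 ≤ p x y) (hrow : ∀ x, ∑ y, p x y = 1) (hpush : ∀ y, ∑ x, ν₀ x * p x y = ν₁ y) :
    ∑ x, max (ν₀ x - ν₁ x) 0 ^ 2 / ν₀ x ≤ hammingWeakCost ν₀ p := by
  refine sum_le_sum fun x _ => ?_
  rw [sum_hamming_mul_eq_one_sub (hrow x)]
  refine max_sub_sq_div_le_one_sub_sq_mul (h₀ x) ?_ ?_
  · exact hrow x ▸ single_le_sum (fun y _ => hp x y) (mem_univ x)
  · exact hpush x ▸ single_le_sum (fun y _ => mul_nonneg (h₀ y) (hp y x)) (mem_univ x)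

theorem hammingWeakCost_hammingOptimalKernel (h₁ : ∀ x, 0 ≤ ν₁ x)
    (hmass : ∑ x, ν₀ x = ∑ x, ν₁ x) :
    hammingWeakCost ν₀ (hammingOptimalKernel ν₀ ν₁) = ∑ x, max (ν₀ x - ν₁ x) 0 ^ 2 / ν₀ x := by
  refine sum_congr rfl fun x _ => ?_
  rw [sum_hamming_mul_eq_one_sub (sum_hammingOptimalKernel hmass x), hammingOptimalKernel_self,
    sub_sub_cancel, ← mul_outflowFraction (h₁ x)]
  by_cases h : ν₀ x = 0
  · simp [h]
  · field_simp

theorem isLeast_hammingWeakCosts (h₀ : ∀ x, 0 ≤ ν₀ x) (h₁ : ∀ x, 0 ≤ ν₁ x)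
    (hmass : ∑ x, ν₀ x = ∑ x, ν₁ x) :
    IsLeast (hammingWeakCosts ν₀ ν₁) (∑ x, max (ν₀ x - ν₁ x) 0 ^ 2 / ν₀ x) := by
  refine ⟨⟨hammingOptimalKernel ν₀ ν₁, hammingOptimalKernel_nonneg h₀ h₁,
    sum_hammingOptimalKernel hmass, sum_mul_hammingOptimalKernel h₁ hmass,
    (hammingWeakCost_hammingOptimalKernel h₁ hmass).symm⟩, ?_⟩
  rintro c ⟨p, hp, hrow, hpush, rfl⟩
  exact sum_max_sub_sq_div_le_hammingWeakCost h₀ hp hrow hpush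

end HammingWeakTransport

theorem weakTransport_hamming_eq_general {V : Type*} [Fintype V] [DecidableEq V]
    (μ ν₀ ν₁ f₀ f₁ : V → ℝ)
    (hμ_pos : ∀ x, 0 ≤ μ x)
    (hf₀ : ∀ x, 0 ≤ f₀ x) (hf₁ : ∀ x, 0 ≤ f₁ x)
    (hν₀ : ∀ x, ν₀ x = f₀ x * μ x) (hν₁ : ∀ x, ν₁ x = f₁ x * μ x)
    (hν₀_sum : ∑ x, ν₀ x = 1) (hν₁_sum : ∑ x, ν₁ x = 1) :
    sInf {c : ℝ | ∃ p : V → V → ℝ,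
        (∀ x y, 0 ≤ p x y) ∧ (∀ x, ∑ y, p x y = 1) ∧
        (∀ y, ∑ x, ν₀ x * p x y = ν₁ y) ∧
        c = ∑ x, (∑ y, (if x = y then 0 else 1) * p x y) ^ 2 * ν₀ x} =
      ∑ x, max (1 - f₁ x / f₀ x) 0 ^ 2 * f₀ x * μ x := by
  have h₀ : ∀ x, 0 ≤ ν₀ x := fun x => hν₀ x ▸ mul_nonneg (hf₀ x) (hμ_pos x)
  have h₁ : ∀ x, 0 ≤ ν₁ x := fun x => hν₁ x ▸ mul_nonneg (hf₁ x) (hμ_pos x)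
  refine (isLeast_hammingWeakCosts h₀ h₁ (hν₀_sum.trans hν₁_sum.symm)).csInf_eq.trans
    (sum_congr rfl fun x _ => ?_)
  rw [hν₀, hν₁, max_one_sub_div_sq_mul_mul (hf₀ x) (hμ_pos x)]

/-- the weak transport cost with Hamming cost `d(x,y) = 1_{x≠y}`,
defined as the infimum over probability kernels `p` pushing `ν₀` to `ν₁` of
`∑_x (∑_y d(x,y) p(x,y))² ν₀(x)`, equals `∑_x [1 - f₁(x)/f₀(x)]₊² f₀(x) μ(x)`. -/
theorem weakTransport_hamming_eq {V : Type*} [Fintype V] [DecidableEq V]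
    (μ ν₀ ν₁ f₀ f₁ : V → ℝ)
    (hμ_pos : ∀ x, 0 ≤ μ x) (hμ_sum : ∑ x, μ x = 1)
    (hf₀ : ∀ x, 0 ≤ f₀ x) (hf₁ : ∀ x, 0 ≤ f₁ x)
    (hν₀ : ∀ x, ν₀ x = f₀ x * μ x) (hν₁ : ∀ x, ν₁ x = f₁ x * μ x)
    (hν₀_sum : ∑ x, ν₀ x = 1) (hν₁_sum : ∑ x, ν₁ x = 1) :
    sInf {c : ℝ | ∃ p : V → V → ℝ,
        (∀ x y, 0 ≤ p x y) ∧ (∀ x, ∑ y, p x y = 1) ∧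
        (∀ y, ∑ x, ν₀ x * p x y = ν₁ y) ∧
        c = ∑ x, (∑ y, (if x = y then 0 else 1) * p x y) ^ 2 * ν₀ x} =
      ∑ x, max (1 - f₁ x / f₀ x) 0 ^ 2 * f₀ x * μ x :=
  weakTransport_hamming_eq_general μ ν₀ ν₁ f₀ f₁ hμ_pos hf₀ hf₁ hν₀ hν₁ hν₀_sum hν₁_sum
end

section
/- Let μ, ν₀, ν₁ be probability measures on a finite set V, with ν₀, ν₁ absolutely continuous with respect to μ, and let ν_t = (1-t)ν₀ + tν₁. Then for all t ∈ [0,1]: H(ν_t|μ) ≤ (1-t)H(ν₀|μ) + tH(ν₁|μ) − (t(1-t)/2)(T̃₂(ν₁|ν₀) + T̃₂(ν₀|ν₁)). -/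
/-!
Everything is pointwise in `x`. On `[0, M]` the second derivative of `u ↦ u log u` is
`1/u ≥ 1/M`, so this function is `M⁻¹`-strongly convex there; taking `M = max (ν₀ x) (ν₁ x)`
bounds the convexity defect at `x` by `t(1-t)/2 · (ν₀ x - ν₁ x)² / M`, and this is exactly the
contribution of `x` to `T̃₂(ν₁|ν₀) + T̃₂(ν₀|ν₁)`. The reference measure only adds the term
`-u log μ(x)`, which is linear in `u`.
-/

open Finset

/-- Relative entropy `H(ν|μ) = ∑_x ν(x) log(ν(x)/μ(x))` on a finite set. -/
noncomputable def relEnt {V : Type*} [Fintype V] (ν μ : V → ℝ) : ℝ :=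
  ∑ x, ν x * Real.log (ν x / μ x)

/-- The weak transport cost `T̃₂(ν₁|ν₀) = ∑_x [1 - ν₁(x)/ν₀(x)]₊² ν₀(x)`
(Hamming cost; this is the density formula, independent of the dominating measure). -/
noncomputable def weakT {V : Type*} [Fintype V] (ν₁ ν₀ : V → ℝ) : ℝ :=
  ∑ x, max (1 - ν₁ x / ν₀ x) 0 ^ 2 * ν₀ x

open Real Set

theorem strongConvexOn_mul_log_Icc (M : ℝ) :
    StrongConvexOn (Icc 0 M) M⁻¹ fun u : ℝ ↦ u * log u := by
  rw [strongConvexOn_iff_convex]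
  refine convexOn_of_hasDerivWithinAt2_nonneg (f' := fun u ↦ log u + 1 - M⁻¹ * u)
    (f'' := fun u ↦ u⁻¹ - M⁻¹) (convex_Icc 0 M) (by fun_prop) ?_ ?_ ?_ <;>
    rw [interior_Icc] <;> rintro u ⟨hu0, huM⟩
  · have h : HasDerivAt (fun u ↦ u * log u - M⁻¹ / 2 * u ^ 2) (log u + 1 - M⁻¹ * u) u :=
      ((hasDerivAt_mul_log hu0.ne').fun_sub ((hasDerivAt_pow 2 u).const_mul (M⁻¹ / 2))).congr_deriv
        (by norm_num; ring)
    simpa only [Real.norm_eq_abs, sq_abs] using h.hasDerivWithinAt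
  · have := ((hasDerivAt_log hu0.ne').add_const 1).fun_sub ((hasDerivAt_id u).const_mul M⁻¹)
    simpa using this.hasDerivWithinAt
  · simpa using inv_anti₀ hu0 huM.le

theorem mul_log_convex_comb_le {a b t : ℝ} (ha : 0 ≤ a) (hb : 0 ≤ b) (ht₀ : 0 ≤ t) (ht₁ : t ≤ 1) :
    ((1 - t) * a + t * b) * log ((1 - t) * a + t * b) ≤
      (1 - t) * (a * log a) + t * (b * log b) - t * (1 - t) / 2 * ((a - b) ^ 2 / max a b) := by
  have h := (strongConvexOn_mul_log_Icc (max a b)).2 ⟨ha, le_max_left a b⟩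
    ⟨hb, le_max_right a b⟩ (sub_nonneg.2 ht₁) ht₀ (sub_add_cancel 1 t)
  simp only [smul_eq_mul, Real.norm_eq_abs, sq_abs] at h
  exact h.trans_eq (by ring)

theorem max_one_sub_div_sq_mul_of_le {a b : ℝ} (hb : 0 ≤ b) (hba : b ≤ a) :
    max (1 - b / a) 0 ^ 2 * a = (a - b) ^ 2 / a := by
  rcases (hb.trans hba).eq_or_lt with rfl | ha
  · simp
  rw [max_eq_left (sub_nonneg.2 ((div_le_one ha).2 hba))]
  field_simp

theorem max_one_sub_div_sq_mul_of_ge {a b : ℝ} (ha : 0 ≤ a) (hab : a ≤ b) :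
    max (1 - b / a) 0 ^ 2 * a = 0 := by
  rcases ha.eq_or_lt with rfl | ha
  · simp
  rw [max_eq_right (sub_nonpos.2 ((one_le_div ha).2 hab))]
  simp

/-- Pointwise form of `T̃₂(ν₁|ν₀) + T̃₂(ν₀|ν₁)`. -/
theorem max_one_sub_div_sq_mul_add_eq {a b : ℝ} (ha : 0 ≤ a) (hb : 0 ≤ b) :
    max (1 - b / a) 0 ^ 2 * a + max (1 - a / b) 0 ^ 2 * b = (a - b) ^ 2 / max a b := by
  rcases le_total b a with hba | hab
  · rw [max_one_sub_div_sq_mul_of_le hb hba, max_one_sub_div_sq_mul_of_ge hb hba,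
      max_eq_left hba, add_zero]
  · rw [max_one_sub_div_sq_mul_of_ge ha hab, max_one_sub_div_sq_mul_of_le ha hab,
      max_eq_right hab, zero_add, ← neg_sub, neg_sq]

theorem mul_log_div_eq {u m : ℝ} (hu : m = 0 → u = 0) :
    u * log (u / m) = u * log u - u * log m := by
  rcases eq_or_ne u 0 with rfl | hu0
  · simp
  rw [log_div hu0 (mt hu hu0)]
  ring

theorem mul_log_div_convex_comb_le {m a b t : ℝ} (ha : 0 ≤ a) (hb : 0 ≤ b)
    (hma : m = 0 → a = 0) (hmb : m = 0 → b = 0) (ht₀ : 0 ≤ t) (ht₁ : t ≤ 1) :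
    ((1 - t) * a + t * b) * log (((1 - t) * a + t * b) / m) ≤
      (1 - t) * (a * log (a / m)) + t * (b * log (b / m)) -
        t * (1 - t) / 2 * (max (1 - b / a) 0 ^ 2 * a + max (1 - a / b) 0 ^ 2 * b) := by
  have hmc : m = 0 → (1 - t) * a + t * b = 0 := fun hm ↦ by simp [hma hm, hmb hm]
  rw [mul_log_div_eq hmc, mul_log_div_eq hma, mul_log_div_eq hmb,
    max_one_sub_div_sq_mul_add_eq ha hb]
  linarith [mul_log_convex_comb_le ha hb ht₀ ht₁]

theorem displacementConvexity_completeGraph_general {V : Type*} [Fintype V]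
    (μ ν₀ ν₁ : V → ℝ)
    (hν₀_pos : ∀ x, 0 ≤ ν₀ x)
    (hν₁_pos : ∀ x, 0 ≤ ν₁ x)
    (hac₀ : ∀ x, μ x = 0 → ν₀ x = 0) (hac₁ : ∀ x, μ x = 0 → ν₁ x = 0)
    (t : ℝ) (ht : t ∈ Set.Icc (0 : ℝ) 1) :
    relEnt (fun x => (1 - t) * ν₀ x + t * ν₁ x) μ ≤
      (1 - t) * relEnt ν₀ μ + t * relEnt ν₁ μ -
        t * (1 - t) / 2 * (weakT ν₁ ν₀ + weakT ν₀ ν₁) := by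
  calc relEnt (fun x => (1 - t) * ν₀ x + t * ν₁ x) μ
      ≤ ∑ x, ((1 - t) * (ν₀ x * log (ν₀ x / μ x)) + t * (ν₁ x * log (ν₁ x / μ x)) -
          t * (1 - t) / 2 *
            (max (1 - ν₁ x / ν₀ x) 0 ^ 2 * ν₀ x + max (1 - ν₀ x / ν₁ x) 0 ^ 2 * ν₁ x)) :=
        sum_le_sum fun x _ ↦ mul_log_div_convex_comb_le (hν₀_pos x) (hν₁_pos x) (hac₀ x)
          (hac₁ x) ht.1 ht.2
    _ = (1 - t) * relEnt ν₀ μ + t * relEnt ν₁ μ -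
          t * (1 - t) / 2 * (weakT ν₁ ν₀ + weakT ν₀ ν₁) := by
        simp only [relEnt, weakT, mul_sum, ← sum_add_distrib, ← sum_sub_distrib]

/-- displacement convexity of the entropy on the complete graph along the
linear interpolation `ν_t = (1-t)ν₀ + tν₁`. -/
theorem displacementConvexity_completeGraph {V : Type*} [Fintype V]
    (μ ν₀ ν₁ : V → ℝ)
    (hμ_pos : ∀ x, 0 ≤ μ x) (hμ_sum : ∑ x, μ x = 1)
    (hν₀_pos : ∀ x, 0 ≤ ν₀ x) (hν₀_sum : ∑ x, ν₀ x = 1)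
    (hν₁_pos : ∀ x, 0 ≤ ν₁ x) (hν₁_sum : ∑ x, ν₁ x = 1)
    (hac₀ : ∀ x, μ x = 0 → ν₀ x = 0) (hac₁ : ∀ x, μ x = 0 → ν₁ x = 0)
    (t : ℝ) (ht : t ∈ Set.Icc (0 : ℝ) 1) :
    relEnt (fun x => (1 - t) * ν₀ x + t * ν₁ x) μ ≤
      (1 - t) * relEnt ν₀ μ + t * relEnt ν₁ μ -
        t * (1 - t) / 2 * (weakT ν₁ ν₀ + weakT ν₀ ν₁) :=
  displacementConvexity_completeGraph_general μ ν₀ ν₁ hν₀_pos hν₁_pos hac₀ hac₁ t ht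
end

section
/- Let f₀, f₁ be probability densities with respect to a probability measure μ on a finite set V, and let f_t = (1-t)f₀ + tf₁. Then the function F(t) = ∑_x f_t(x) log f_t(x) μ(x) satisfies F''(t) ≥ T̃₂(ν₁|ν₀) + T̃₂(ν₀|ν₁) for all t ∈ (0,1), where νᵢ = fᵢμ and T̃₂(ν₁|ν₀) = ∑_x [1-f₁(x)/f₀(x)]₊² f₀(x)μ(x). -/
/-!
Along the segment `f_s = (1 - s) f₀ + s f₁` each summand `f_s log f_s` has second derivative
`(f₁ - f₀)² / f_t`, so `F''(t) = ∑ (f₁ - f₀)² / f_t · μ`. Pointwise, at most one of the two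
positive parts is nonzero and the sum of the two transport integrands is `(f₁ - f₀)² / max f₀ f₁`;
since `f_t ≤ max f₀ f₁`, this is at most `(f₁ - f₀)² / f_t`.
-/

open Finset Real Filter Topology

lemma hasDerivAt_segment (a b s : ℝ) :
    HasDerivAt (fun s : ℝ => (1 - s) * a + s * b) (b - a) s := by
  refine ((((hasDerivAt_id s).const_sub 1).mul_const a).add
    ((hasDerivAt_id s).mul_const b)).congr_deriv ?_
  ring

lemma hasDerivAt_segment_mul_log {a b s : ℝ} (hs : (1 - s) * a + s * b ≠ 0) :
    HasDerivAt (fun s : ℝ => ((1 - s) * a + s * b) * log ((1 - s) * a + s * b))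
      ((b - a) * (log ((1 - s) * a + s * b) + 1)) s := by
  refine ((hasDerivAt_mul_log hs).comp s (hasDerivAt_segment a b s)).congr_deriv ?_
  ring

lemma hasDerivAt_sub_mul_log_segment_add_one {a b s : ℝ} (hs : (1 - s) * a + s * b ≠ 0) :
    HasDerivAt (fun s : ℝ => (b - a) * (log ((1 - s) * a + s * b) + 1))
      ((b - a) ^ 2 / ((1 - s) * a + s * b)) s := by
  refine ((((hasDerivAt_segment a b s).log hs).add_const 1).const_mul (b - a)).congr_deriv ?_
  ring

lemma segment_le_max {a b t : ℝ} (ht₀ : 0 ≤ t) (ht₁ : t ≤ 1) :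
    (1 - t) * a + t * b ≤ max a b :=
  calc (1 - t) * a + t * b ≤ (1 - t) * max a b + t * max a b := by
        have := le_max_left a b; have := le_max_right a b
        nlinarith
    _ = max a b := by ring

lemma min_le_segment {a b t : ℝ} (ht₀ : 0 ≤ t) (ht₁ : t ≤ 1) :
    min a b ≤ (1 - t) * a + t * b :=
  calc min a b = (1 - t) * min a b + t * min a b := by ring
    _ ≤ (1 - t) * a + t * b := by
        have := min_le_left a b; have := min_le_right a b
        nlinarith

lemma segment_pos {a b t : ℝ} (ha : 0 < a) (hb : 0 < b) (ht₀ : 0 ≤ t) (ht₁ : t ≤ 1) :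
    0 < (1 - t) * a + t * b :=
  (lt_min ha hb).trans_le (min_le_segment ht₀ ht₁)

lemma deriv_deriv_sum_segment_mul_log {V : Type*} [Fintype V] (μ f₀ f₁ : V → ℝ) {t : ℝ}
    (ht : ∀ x, (1 - t) * f₀ x + t * f₁ x ≠ 0) :
    deriv (deriv (fun s : ℝ => ∑ x, ((1 - s) * f₀ x + s * f₁ x) *
        log ((1 - s) * f₀ x + s * f₁ x) * μ x)) t =
      ∑ x, (f₁ x - f₀ x) ^ 2 / ((1 - t) * f₀ x + t * f₁ x) * μ x := by
  have h_near : ∀ᶠ s in 𝓝 t, ∀ x, (1 - s) * f₀ x + s * f₁ x ≠ 0 :=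
    eventually_all.2 fun x => (hasDerivAt_segment _ _ t).continuousAt.eventually_ne (ht x)
  have h_deriv : deriv (fun s : ℝ => ∑ x, ((1 - s) * f₀ x + s * f₁ x) *
        log ((1 - s) * f₀ x + s * f₁ x) * μ x) =ᶠ[𝓝 t]
      fun s => ∑ x, (f₁ x - f₀ x) * (log ((1 - s) * f₀ x + s * f₁ x) + 1) * μ x := by
    filter_upwards [h_near] with s hs
    exact (HasDerivAt.fun_sum fun x _ => (hasDerivAt_segment_mul_log (hs x)).mul_const (μ x)).deriv
  rw [h_deriv.deriv_eq]
  exact (HasDerivAt.fun_sum fun x _ =>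
    (hasDerivAt_sub_mul_log_segment_add_one (ht x)).mul_const (μ x)).deriv

lemma posPart_sq_mul_add_posPart_sq_mul {a b : ℝ} (ha : 0 < a) (hb : 0 < b) :
    max (1 - b / a) 0 ^ 2 * a + max (1 - a / b) 0 ^ 2 * b = (b - a) ^ 2 / max a b := by
  rcases le_total b a with h | h
  · rw [max_eq_right (sub_nonpos.2 ((one_le_div hb).2 h)),
      max_eq_left (sub_nonneg.2 (div_le_one_of_le₀ h ha.le)), max_eq_left h]
    field_simp
    ring
  · rw [max_eq_right (sub_nonpos.2 ((one_le_div ha).2 h)),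
      max_eq_left (sub_nonneg.2 (div_le_one_of_le₀ h hb.le)), max_eq_right h]
    field_simp
    ring

lemma posPart_sq_mul_add_posPart_sq_mul_le {a b t : ℝ} (ha : 0 < a) (hb : 0 < b)
    (ht₀ : 0 ≤ t) (ht₁ : t ≤ 1) :
    max (1 - b / a) 0 ^ 2 * a + max (1 - a / b) 0 ^ 2 * b ≤
      (b - a) ^ 2 / ((1 - t) * a + t * b) := by
  rw [posPart_sq_mul_add_posPart_sq_mul ha hb]
  exact div_le_div_of_nonneg_left (sq_nonneg _) (segment_pos ha hb ht₀ ht₁)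
    (segment_le_max ht₀ ht₁)

theorem second_deriv_entropy_ge_weakTransport_general {V : Type*} [Fintype V]
    (μ f₀ f₁ : V → ℝ)
    (hμ_pos : ∀ x, 0 ≤ μ x)
    (hf₀_pos : ∀ x, 0 < f₀ x) (hf₁_pos : ∀ x, 0 < f₁ x)
    (t : ℝ) (ht : t ∈ Set.Ioo (0 : ℝ) 1) :
    deriv (deriv (fun s : ℝ => ∑ x, ((1 - s) * f₀ x + s * f₁ x) *
        Real.log ((1 - s) * f₀ x + s * f₁ x) * μ x)) t ≥
      (∑ x, max (1 - f₁ x / f₀ x) 0 ^ 2 * f₀ x * μ x) +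
      (∑ x, max (1 - f₀ x / f₁ x) 0 ^ 2 * f₁ x * μ x) := by
  have h_pos (x : V) : 0 < (1 - t) * f₀ x + t * f₁ x :=
    segment_pos (hf₀_pos x) (hf₁_pos x) ht.1.le ht.2.le
  rw [ge_iff_le, deriv_deriv_sum_segment_mul_log μ f₀ f₁ fun x => (h_pos x).ne',
    ← sum_add_distrib]
  gcongr with x
  simpa only [add_mul] using mul_le_mul_of_nonneg_right
    (posPart_sq_mul_add_posPart_sq_mul_le (hf₀_pos x) (hf₁_pos x) ht.1.le ht.2.le) (hμ_pos x)

/-- the second derivative of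
`F(t) = ∑_x f_t(x) log f_t(x) μ(x)` with `f_t = (1-t)f₀ + tf₁` is bounded below by
`T̃₂(ν₁|ν₀) + T̃₂(ν₀|ν₁)` for `t ∈ (0,1)`, where
`T̃₂(ν₁|ν₀) = ∑_x [1 - f₁(x)/f₀(x)]₊² f₀(x) μ(x)`. -/
theorem second_deriv_entropy_ge_weakTransport {V : Type*} [Fintype V]
    (μ f₀ f₁ : V → ℝ)
    (hμ_pos : ∀ x, 0 ≤ μ x) (hμ_sum : ∑ x, μ x = 1)
    (hf₀_pos : ∀ x, 0 < f₀ x) (hf₁_pos : ∀ x, 0 < f₁ x)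
    (hf₀_sum : ∑ x, f₀ x * μ x = 1) (hf₁_sum : ∑ x, f₁ x * μ x = 1)
    (t : ℝ) (ht : t ∈ Set.Ioo (0 : ℝ) 1) :
    deriv (deriv (fun s : ℝ => ∑ x, ((1 - s) * f₀ x + s * f₁ x) *
        Real.log ((1 - s) * f₀ x + s * f₁ x) * μ x)) t ≥
      (∑ x, max (1 - f₁ x / f₀ x) 0 ^ 2 * f₀ x * μ x) +
      (∑ x, max (1 - f₀ x / f₁ x) 0 ^ 2 * f₁ x * μ x) :=
  second_deriv_entropy_ge_weakTransport_general μ f₀ f₁ hμ_pos hf₀_pos hf₁_pos t ht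
end

section
/- Let μ, ν₀, ν₁ be probability measures on a finite set V with ν₀, ν₁ ≪ μ, and let ν_t = (1-t)ν₀ + tν₁. Then for all t ∈ [0,1]: H(ν_t|μ) ≤ (1-t)H(ν₀|μ) + tH(ν₁|μ) − (t(1-t)/2)‖ν₀ − ν₁‖²_TV. -/
open Finset

/-!
Where `μ` vanishes so do `ν₀` and `ν₁`, hence `H(ν|μ) = ∑ ν log ν - ∑ ν log μ`, and the second
sum is affine along the segment `ν_s`. The first one, `φ(s) = ∑ ν_s log ν_s`, has
`φ'' = ∑ (ν₁ - ν₀)² / ν_s ≥ (∑ |ν₁ - ν₀|)²` by Cauchy–Schwarz, since `∑ ν_s = 1`; so `φ` is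
`‖ν₀ - ν₁‖²_TV`-strongly convex on `[0, 1]`.
-/

open Real

theorem strongConvexOn_of_hasDerivAt2_ge {D : Set ℝ} (hD : Convex ℝ D) {f f' f'' : ℝ → ℝ}
    {m : ℝ} (hf : ContinuousOn f D) (hf' : ∀ x ∈ interior D, HasDerivAt f (f' x) x)
    (hf'' : ∀ x ∈ interior D, HasDerivAt f' (f'' x) x) (hm : ∀ x ∈ interior D, m ≤ f'' x) :
    StrongConvexOn D m f := by
  simp_rw [strongConvexOn_iff_convex, Real.norm_eq_abs, sq_abs]
  have hsq (x : ℝ) : HasDerivAt (fun x => m / 2 * x ^ 2) (m * x) x :=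
    ((hasDerivAt_pow 2 x).const_mul (m / 2)).congr_deriv (by norm_num; ring)
  refine convexOn_of_hasDerivWithinAt2_nonneg hD (f' := fun x => f' x - m * x)
    (f'' := fun x => f'' x - m) (hf.sub (by fun_prop)) (fun x hx => ?_) (fun x hx => ?_)
    (fun x hx => sub_nonneg.2 (hm x hx))
  · exact ((hf' x hx).sub (hsq x)).hasDerivWithinAt
  · exact ((hf'' x hx).sub ((hasDerivAt_id' x).const_mul m)).hasDerivWithinAt.congr_deriv
      (by rw [mul_one])

theorem sq_sum_abs_le_sum_mul_sum_sq_div {ι : Type*} (s : Finset ι) {w d : ι → ℝ}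
    (hw : ∀ i ∈ s, 0 ≤ w i) (hd : ∀ i ∈ s, w i = 0 → d i = 0) :
    (∑ i ∈ s, |d i|) ^ 2 ≤ (∑ i ∈ s, w i) * ∑ i ∈ s, d i ^ 2 / w i := by
  refine sum_sq_le_sum_mul_sum_of_sq_le_mul s hw (fun i hi => div_nonneg (sq_nonneg _) (hw i hi))
    fun i hi => ?_
  rcases (hw i hi).eq_or_lt with h | h
  · simp [hd i hi h.symm]
  · rw [sq_abs, mul_div_cancel₀ _ h.ne']

section Segment

variable {a b s : ℝ}

theorem eq_of_one_sub_mul_add_mul_eq_zero (ha : 0 ≤ a) (hb : 0 ≤ b) (hs : s ∈ Set.Ioo 0 1)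
    (h : (1 - s) * a + s * b = 0) : a = b := by
  obtain ⟨ha', hb'⟩ :=
    (add_eq_zero_iff_of_nonneg (mul_nonneg (sub_nonneg.2 hs.2.le) ha) (mul_nonneg hs.1.le hb)).1 h
  rw [(mul_eq_zero.1 ha').resolve_left (sub_ne_zero.2 hs.2.ne'),
    (mul_eq_zero.1 hb').resolve_left hs.1.ne']

theorem hasDerivAt_one_sub_mul_add_mul (a b s : ℝ) :
    HasDerivAt (fun s => (1 - s) * a + s * b) (b - a) s :=
  ((((hasDerivAt_id' s).const_sub 1).mul_const a).add ((hasDerivAt_id' s).mul_const b)).congr_deriv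
    (by ring)

theorem hasDerivAt_mul_log_one_sub_mul_add_mul (h : (1 - s) * a + s * b = 0 → a = b) :
    HasDerivAt (fun s => ((1 - s) * a + s * b) * log ((1 - s) * a + s * b))
      ((b - a) * (log ((1 - s) * a + s * b) + 1)) s := by
  rcases eq_or_ne ((1 - s) * a + s * b) 0 with h0 | h0
  · obtain rfl := h h0
    simp only [sub_self, zero_mul, ← add_mul, sub_add_cancel, one_mul]
    exact hasDerivAt_const s _
  · rw [mul_comm]
    exact (hasDerivAt_mul_log h0).comp s (hasDerivAt_one_sub_mul_add_mul a b s)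

theorem hasDerivAt_mul_log_add_one_one_sub_mul_add_mul (h : (1 - s) * a + s * b = 0 → a = b) :
    HasDerivAt (fun s => (b - a) * (log ((1 - s) * a + s * b) + 1))
      ((b - a) ^ 2 / ((1 - s) * a + s * b)) s := by
  rcases eq_or_ne ((1 - s) * a + s * b) 0 with h0 | h0
  · obtain rfl := h h0
    simp only [sub_self, zero_mul, ne_eq, OfNat.ofNat_ne_zero, not_false_eq_true, zero_pow,
      zero_div]
    exact hasDerivAt_const s _
  · exact ((((hasDerivAt_one_sub_mul_add_mul a b s).log h0).add_const 1).const_mul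
      (b - a)).congr_deriv (by ring)

end Segment

noncomputable def negEntropy {V : Type*} [Fintype V] (ν : V → ℝ) : ℝ :=
  ∑ x, ν x * log (ν x)

theorem relEnt_eq_negEntropy_sub {V : Type*} [Fintype V] {ν μ : V → ℝ}
    (hac : ∀ x, μ x = 0 → ν x = 0) :
    relEnt ν μ = negEntropy ν - ∑ x, ν x * log (μ x) := by
  rw [relEnt, negEntropy, ← sum_sub_distrib]
  refine sum_congr rfl fun x _ => ?_
  rcases eq_or_ne (ν x) 0 with h | h
  · simp [h]
  · rw [log_div h (mt (hac x) h), mul_sub]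

theorem strongConvexOn_negEntropy_segment {V : Type*} [Fintype V] {p q : V → ℝ}
    (hp : ∀ x, 0 ≤ p x) (hp1 : ∑ x, p x = 1) (hq : ∀ x, 0 ≤ q x) (hq1 : ∑ x, q x = 1) :
    StrongConvexOn (Set.Icc 0 1) ((∑ x, |p x - q x|) ^ 2)
      fun s => negEntropy fun x => (1 - s) * p x + s * q x := by
  refine strongConvexOn_of_hasDerivAt2_ge (convex_Icc 0 1)
    (f' := fun s => ∑ x, (q x - p x) * (log ((1 - s) * p x + s * q x) + 1))
    (f'' := fun s => ∑ x, (q x - p x) ^ 2 / ((1 - s) * p x + s * q x))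
    (continuous_finsetSum _ fun x _ => continuous_mul_log.comp (by fun_prop)).continuousOn
    ?_ ?_ ?_ <;> rw [interior_Icc (a := (0 : ℝ))] <;> intro s hs
  · exact HasDerivAt.fun_sum fun x _ => hasDerivAt_mul_log_one_sub_mul_add_mul
      (eq_of_one_sub_mul_add_mul_eq_zero (hp x) (hq x) hs)
  · exact HasDerivAt.fun_sum fun x _ => hasDerivAt_mul_log_add_one_one_sub_mul_add_mul
      (eq_of_one_sub_mul_add_mul_eq_zero (hp x) (hq x) hs)
  · have hsum : ∑ x, ((1 - s) * p x + s * q x) = 1 := by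
      rw [sum_add_distrib, ← mul_sum, ← mul_sum, hp1, hq1]
      ring
    calc (∑ x, |p x - q x|) ^ 2 = (∑ x, |q x - p x|) ^ 2 := by simp_rw [abs_sub_comm]
      _ ≤ (∑ x, ((1 - s) * p x + s * q x)) * ∑ x, (q x - p x) ^ 2 / ((1 - s) * p x + s * q x) :=
        sq_sum_abs_le_sum_mul_sum_sq_div _ (fun x _ => add_nonneg
          (mul_nonneg (sub_nonneg.2 hs.2.le) (hp x)) (mul_nonneg hs.1.le (hq x)))
          fun x _ h => sub_eq_zero.2 (eq_of_one_sub_mul_add_mul_eq_zero (hp x) (hq x) hs h).symm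
      _ = _ := by rw [hsum, one_mul]

theorem displacementConvexity_TV_general {V : Type*} [Fintype V]
    (μ ν₀ ν₁ : V → ℝ)
    (hν₀_pos : ∀ x, 0 ≤ ν₀ x) (hν₀_sum : ∑ x, ν₀ x = 1)
    (hν₁_pos : ∀ x, 0 ≤ ν₁ x) (hν₁_sum : ∑ x, ν₁ x = 1)
    (hac₀ : ∀ x, μ x = 0 → ν₀ x = 0) (hac₁ : ∀ x, μ x = 0 → ν₁ x = 0)
    (t : ℝ) (ht : t ∈ Set.Icc (0 : ℝ) 1) :
    relEnt (fun x => (1 - t) * ν₀ x + t * ν₁ x) μ ≤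
      (1 - t) * relEnt ν₀ μ + t * relEnt ν₁ μ -
        t * (1 - t) / 2 * (∑ x, |ν₀ x - ν₁ x|) ^ 2 := by
  have hac : ∀ x, μ x = 0 → (1 - t) * ν₀ x + t * ν₁ x = 0 := fun x hx => by
    simp [hac₀ x hx, hac₁ x hx]
  have hentropy : negEntropy (fun x => (1 - t) * ν₀ x + t * ν₁ x) ≤
      (1 - t) * negEntropy ν₀ + t * negEntropy ν₁ -
        t * (1 - t) / 2 * (∑ x, |ν₀ x - ν₁ x|) ^ 2 := by
    have h := (strongConvexOn_negEntropy_segment hν₀_pos hν₀_sum hν₁_pos hν₁_sum).2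
      (Set.left_mem_Icc.2 zero_le_one) (Set.right_mem_Icc.2 zero_le_one) (sub_nonneg.2 ht.2) ht.1
      (sub_add_cancel 1 t)
    norm_num at h
    linarith
  have haffine : ∑ x, ((1 - t) * ν₀ x + t * ν₁ x) * log (μ x) =
      (1 - t) * ∑ x, ν₀ x * log (μ x) + t * ∑ x, ν₁ x * log (μ x) := by
    simp only [add_mul, mul_assoc, sum_add_distrib, ← mul_sum]
  rw [relEnt_eq_negEntropy_sub hac, relEnt_eq_negEntropy_sub hac₀, relEnt_eq_negEntropy_sub hac₁,
    haffine]
  linarith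

/-- reinforced convexity of the entropy along the linear interpolation,
with deficit `(t(1-t)/2) ‖ν₀ − ν₁‖²_TV` where `‖ν₀−ν₁‖_TV = ∑_x |ν₀(x)−ν₁(x)|`. -/
theorem displacementConvexity_TV {V : Type*} [Fintype V]
    (μ ν₀ ν₁ : V → ℝ)
    (hμ_pos : ∀ x, 0 ≤ μ x) (hμ_sum : ∑ x, μ x = 1)
    (hν₀_pos : ∀ x, 0 ≤ ν₀ x) (hν₀_sum : ∑ x, ν₀ x = 1)
    (hν₁_pos : ∀ x, 0 ≤ ν₁ x) (hν₁_sum : ∑ x, ν₁ x = 1)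
    (hac₀ : ∀ x, μ x = 0 → ν₀ x = 0) (hac₁ : ∀ x, μ x = 0 → ν₁ x = 0)
    (t : ℝ) (ht : t ∈ Set.Icc (0 : ℝ) 1) :
    relEnt (fun x => (1 - t) * ν₀ x + t * ν₁ x) μ ≤
      (1 - t) * relEnt ν₀ μ + t * relEnt ν₁ μ -
        t * (1 - t) / 2 * (∑ x, |ν₀ x - ν₁ x|) ^ 2 :=
  displacementConvexity_TV_general μ ν₀ ν₁ hν₀_pos hν₀_sum hν₁_pos hν₁_sum hac₀ hac₁ t ht
end

section
/- For any two probability measures ν₀, ν₁ on a finite set V, the weak transport costs with Hamming cost satisfy T̃₂(ν₁|ν₀) + T̃₂(ν₀|ν₁) ≥ ‖ν₀−ν₁‖²_TV / (1 + ‖ν₀−ν₁‖_TV/2) ≥ (1/2)‖ν₀−ν₁‖²_TV. -/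
open Finset

/-! At each point only one of the two weak costs is nonzero, and together they contribute
`(ν₀ - ν₁)² / max ν₀ ν₁`. Cauchy–Schwarz against the weights `max ν₀ ν₁`, whose total mass is
`1 + ‖ν₀ - ν₁‖_TV / 2`, gives the first inequality; the second one is `‖ν₀ - ν₁‖_TV ≤ 2`. -/

lemma max_one_sub_div_sq_mul_add_max_one_sub_div_sq_mul {p q : ℝ} (hp : 0 ≤ p) (hq : 0 ≤ q) :
    max (1 - q / p) 0 ^ 2 * p + max (1 - p / q) 0 ^ 2 * q = (p - q) ^ 2 / max p q := by
  wlog hqp : q ≤ p generalizing p q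
  · rw [add_comm, max_comm p q, sub_sq_comm p q]
    exact this hq hp (le_of_not_ge hqp)
  have hpq : max (1 - p / q) 0 ^ 2 * q = 0 := by
    rcases hq.eq_or_lt with rfl | hq
    · simp
    · rw [max_eq_right (by rw [sub_nonpos, one_le_div hq]; exact hqp)]; simp
  rw [hpq, add_zero, max_eq_left hqp]
  rcases hp.eq_or_lt with rfl | hp
  · simp
  · rw [max_eq_left (sub_nonneg.2 ((div_le_one hp).2 hqp))]
    field_simp

lemma two_mul_max_eq_add_add_abs_sub (a b : ℝ) : 2 * max a b = a + b + |a - b| := by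
  have := min_add_max a b
  have := max_sub_min_eq_abs a b
  rw [abs_sub_comm]
  linarith

section

variable {V : Type*} [Fintype V]

theorem weakT_add_weakT_eq_sum {p q : V → ℝ} (hp : ∀ x, 0 ≤ p x) (hq : ∀ x, 0 ≤ q x) :
    weakT q p + weakT p q = ∑ x, (p x - q x) ^ 2 / max (p x) (q x) := by
  rw [weakT, weakT, ← sum_add_distrib]
  exact sum_congr rfl fun x _ ↦
    max_one_sub_div_sq_mul_add_max_one_sub_div_sq_mul (hp x) (hq x)

theorem sq_sum_abs_sub_le {p q : V → ℝ} (hp : ∀ x, 0 ≤ p x) (hq : ∀ x, 0 ≤ q x) :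
    (∑ x, |p x - q x|) ^ 2 ≤
      (∑ x, (p x - q x) ^ 2 / max (p x) (q x)) * ∑ x, max (p x) (q x) := by
  refine sum_sq_le_sum_mul_sum_of_sq_le_mul _
    (fun x _ ↦ div_nonneg (sq_nonneg _) (le_max_of_le_left (hp x)))
    (fun x _ ↦ le_max_of_le_left (hp x)) fun x _ ↦ ?_
  rw [sq_abs, div_mul_cancel_of_imp]
  intro h
  have hp0 : p x = 0 := le_antisymm (h ▸ le_max_left _ _) (hp x)
  have hq0 : q x = 0 := le_antisymm (h ▸ le_max_right _ _) (hq x)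
  simp [hp0, hq0]

theorem sum_max_eq_one_add_half_sum_abs_sub {p q : V → ℝ} (hp : ∑ x, p x = 1)
    (hq : ∑ x, q x = 1) :
    ∑ x, max (p x) (q x) = 1 + (∑ x, |p x - q x|) / 2 := by
  have : 2 * ∑ x, max (p x) (q x) = ∑ x, p x + ∑ x, q x + ∑ x, |p x - q x| := by
    simp only [mul_sum, two_mul_max_eq_add_add_abs_sub, sum_add_distrib]
  linarith

theorem sum_abs_sub_le_two {p q : V → ℝ} (hp₀ : ∀ x, 0 ≤ p x) (hp : ∑ x, p x = 1)
    (hq₀ : ∀ x, 0 ≤ q x) (hq : ∑ x, q x = 1) :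
    ∑ x, |p x - q x| ≤ 2 :=
  calc ∑ x, |p x - q x| ≤ ∑ x, (p x + q x) :=
        sum_le_sum fun x _ ↦ abs_sub_le_iff.2 ⟨by linarith [hq₀ x], by linarith [hp₀ x]⟩
    _ = 2 := by rw [sum_add_distrib, hp, hq]; norm_num

end

/-- comparison between the symmetrized weak transport cost and the
total variation distance:
`T̃₂(ν₁|ν₀) + T̃₂(ν₀|ν₁) ≥ ‖ν₀−ν₁‖²_TV / (1 + ‖ν₀−ν₁‖_TV/2) ≥ ½ ‖ν₀−ν₁‖²_TV`. -/
theorem weakTransport_ge_TV {V : Type*} [Fintype V]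
    (ν₀ ν₁ : V → ℝ)
    (hν₀_pos : ∀ x, 0 ≤ ν₀ x) (hν₀_sum : ∑ x, ν₀ x = 1)
    (hν₁_pos : ∀ x, 0 ≤ ν₁ x) (hν₁_sum : ∑ x, ν₁ x = 1) :
    weakT ν₁ ν₀ + weakT ν₀ ν₁ ≥
      (∑ x, |ν₀ x - ν₁ x|) ^ 2 / (1 + (∑ x, |ν₀ x - ν₁ x|) / 2) ∧
    (∑ x, |ν₀ x - ν₁ x|) ^ 2 / (1 + (∑ x, |ν₀ x - ν₁ x|) / 2) ≥
      (1 / 2) * (∑ x, |ν₀ x - ν₁ x|) ^ 2 := by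
  set d := ∑ x, |ν₀ x - ν₁ x|
  have hd₀ : 0 ≤ d := sum_nonneg fun x _ ↦ abs_nonneg _
  have hd₂ : d ≤ 2 := sum_abs_sub_le_two hν₀_pos hν₀_sum hν₁_pos hν₁_sum
  have hCS : d ^ 2 ≤ (weakT ν₁ ν₀ + weakT ν₀ ν₁) * (1 + d / 2) := by
    rw [weakT_add_weakT_eq_sum hν₀_pos hν₁_pos,
      ← sum_max_eq_one_add_half_sum_abs_sub hν₀_sum hν₁_sum]
    exact sq_sum_abs_sub_le hν₀_pos hν₁_pos
  constructor
  · exact (div_le_iff₀ (by positivity)).2 hCS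
  · calc 1 / 2 * d ^ 2 = d ^ 2 / 2 := by ring
      _ ≤ d ^ 2 / (1 + d / 2) := by gcongr; linarith
end

section
/- HWI inequality on the two-point space: let μ be Bernoulli(p) on {0,1}, and f : {0,1} → (0,∞) with (1-p)f(0) + pf(1) = 1. Then Ent_μ(f) ≤ p(1-p)(f(1)−f(0))(log f(1)−log f(0)) − (1/2)(T̃₂(μ|fμ) + T̃₂(fμ|μ)). -/
/-! For `μ = Bernoulli(p)` the covariance formula gives
`E[f log f] = p(1-p)(f 1 - f 0)(log f 1 - log f 0) + E[f] E[log f]`, and `E[f] = 1`.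
At a point where `f = y`, the two weak transport integrands add up to at most
`2 (y - 1 - log y) μ`: for `y ≤ 1` this is `log y ≤ y - 1 - (1 - y)² / 2`, for `y ≥ 1` it is
`log y ≤ sinh (log y)`. Summing and using `E[f] = 1` again bounds
`½ (T̃₂(μ|fμ) + T̃₂(fμ|μ))` by `-E[log f]`. -/

open Finset

open Real

namespace Real

theorem log_le_sub_one_sub_sq_div_two {y : ℝ} (hy₀ : 0 < y) (hy₁ : y ≤ 1) :
    log y ≤ y - 1 - (1 - y) ^ 2 / 2 := by
  have hderiv : ∀ s ∈ interior (Set.Ioi (0 : ℝ)), HasDerivWithinAt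
      (fun s => log s - s + (1 - s) ^ 2 / 2) ((1 - s) ^ 2 / s) (interior (Set.Ioi 0)) s := by
    intro s hs
    have hs : s ≠ 0 := (Set.mem_Ioi.mp (interior_subset hs)).ne'
    have := ((hasDerivAt_log hs).sub (hasDerivAt_id s)).add
      ((((hasDerivAt_id s).const_sub 1).pow 2).div_const 2)
    refine (this.congr_deriv ?_).hasDerivWithinAt
    simp only [id]
    field_simp
    ring
  have hcont : ContinuousOn (fun s => log s - s + (1 - s) ^ 2 / 2) (Set.Ioi 0) :=
    ((continuousOn_log.mono fun s hs => ne_of_gt hs).sub continuousOn_id).add (by fun_prop)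
  have hmono := monotoneOn_of_hasDerivWithinAt_nonneg (convex_Ioi 0) hcont hderiv
    fun s hs => div_nonneg (sq_nonneg _) (Set.mem_Ioi.mp (interior_subset hs)).le
  have hle := hmono hy₀ (Set.mem_Ioi.mpr one_pos) hy₁
  simp only [log_one] at hle
  linarith

theorem log_le_sub_inv_div_two {y : ℝ} (hy : 1 ≤ y) : log y ≤ (y - y⁻¹) / 2 := by
  rw [← sinh_log (by linarith)]
  exact self_le_sinh_iff.mpr (log_nonneg hy)

end Real

theorem weakT_density_add_le {y : ℝ} (hy : 0 < y) :
    max (1 - y⁻¹) 0 ^ 2 * y + max (1 - y) 0 ^ 2 ≤ 2 * (y - 1 - log y) := by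
  rcases le_total y 1 with hy₁ | hy₁
  · have hinv : 1 ≤ y⁻¹ := one_le_inv₀ hy |>.mpr hy₁
    rw [max_eq_right (by linarith), max_eq_left (by linarith)]
    linarith [log_le_sub_one_sub_sq_div_two hy hy₁]
  · have hinv : y⁻¹ ≤ 1 := inv_le_one_of_one_le₀ hy₁
    rw [max_eq_left (by linarith), max_eq_right (by linarith)]
    have : (1 - y⁻¹) ^ 2 * y = y - 2 + y⁻¹ := by field_simp; ring
    linarith [log_le_sub_inv_div_two hy₁]

theorem weakT_add_weakT_le {V : Type*} [Fintype V] (μ f : V → ℝ) (hμ : ∀ x, 0 ≤ μ x)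
    (hf : ∀ x, 0 < f x) :
    weakT μ (fun x => f x * μ x) + weakT (fun x => f x * μ x) μ ≤
      2 * ∑ x, (f x - 1 - log (f x)) * μ x := by
  rw [weakT, weakT, ← sum_add_distrib, mul_sum]
  refine sum_le_sum fun x _ => ?_
  rcases eq_or_ne (μ x) 0 with h | h
  · simp [h]
  rw [div_mul_cancel_right₀ h, mul_div_cancel_right₀ _ h]
  calc max (1 - (f x)⁻¹) 0 ^ 2 * (f x * μ x) + max (1 - f x) 0 ^ 2 * μ x
      = (max (1 - (f x)⁻¹) 0 ^ 2 * f x + max (1 - f x) 0 ^ 2) * μ x := by ring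
    _ ≤ 2 * (f x - 1 - log (f x)) * μ x :=
      mul_le_mul_of_nonneg_right (weakT_density_add_le (hf x)) (hμ x)
    _ = _ := by ring

theorem bernoulli_mean_mul_eq_cov_add (p a b u v : ℝ) :
    (1 - p) * (a * u) + p * (b * v) =
      p * (1 - p) * (b - a) * (v - u) + ((1 - p) * a + p * b) * ((1 - p) * u + p * v) := by
  ring

/-- HWI inequality on the two-point space: for `μ = Bernoulli(p)` and a
positive density `f`,
`Ent_μ(f) ≤ p(1-p)(f(1)−f(0))(log f(1)−log f(0)) − ½(T̃₂(μ|fμ) + T̃₂(fμ|μ))`. -/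
theorem hwi_two_point (p : ℝ) (hp : 0 < p) (hp' : p < 1)
    (μ : Fin 2 → ℝ) (hμ0 : μ 0 = 1 - p) (hμ1 : μ 1 = p)
    (f : Fin 2 → ℝ) (hf_pos : ∀ x, 0 < f x)
    (hf_sum : ∑ x, f x * μ x = 1) :
    ∑ x, f x * Real.log (f x) * μ x ≤
      p * (1 - p) * (f 1 - f 0) * (Real.log (f 1) - Real.log (f 0)) -
        (1 / 2) * (weakT μ (fun x => f x * μ x) + weakT (fun x => f x * μ x) μ) := by
  have hμ : ∀ x, 0 ≤ μ x := Fin.forall_fin_two.mpr ⟨hμ0 ▸ sub_nonneg.mpr hp'.le, hμ1 ▸ hp.le⟩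
  have hcost := weakT_add_weakT_le μ f hμ hf_pos
  have hcov := bernoulli_mean_mul_eq_cov_add p (f 0) (f 1) (log (f 0)) (log (f 1))
  simp only [Fin.sum_univ_two, hμ0, hμ1] at hf_sum hcost ⊢
  rw [show (1 - p) * f 0 + p * f 1 = 1 by linarith, one_mul] at hcov
  linarith
end

section
/- HWI inequality on the complete graph: let μ be the uniform measure on the complete graph K_n and f : K_n → (0,∞) with ∑_x f(x)μ(x) = 1. Then Ent_μ(f) ≤ E_μ(f, log f) − (1/2)(T̃₂(μ|fμ) + T̃₂(fμ|μ)), where E_μ(f, log f) = (1/2)∑_{x,y} (f(y)−f(x))(log f(y) − log f(x)) μ(x)μ(y). -/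
/-!
Expanding the Dirichlet form of the complete graph gives `E_μ(f, log f) = Ent_μ(f) - ∫ log f dμ`
once `∫ f dμ = 1`, so the inequality reduces to `T̃₂(μ|fμ) + T̃₂(fμ|μ) ≤ ∫ 2(f - 1 - log f) dμ`.
This holds pointwise: for `t ≥ 1` only the first cost contributes and the bound is
`2 log t ≤ t - t⁻¹`, i.e. `log t ≤ sinh (log t)`; for `t ≤ 1` only the second one contributes and
the bound is the second-order Taylor estimate `log t ≤ (t - 1) - (t - 1)² / 2`.
-/

open Finset

namespace Real

theorem two_mul_log_le_sub_inv {t : ℝ} (ht : 1 ≤ t) : 2 * log t ≤ t - t⁻¹ := by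
  have h := self_le_sinh_iff.2 (log_nonneg ht)
  rw [sinh_log (by linarith)] at h
  linarith

theorem log_le_sub_one_sub_sq_div_two_s17 {t : ℝ} (ht₀ : 0 < t) (ht₁ : t ≤ 1) :
    log t ≤ t - 1 - (1 - t) ^ 2 / 2 := by
  have hu : 0 ≤ 1 - t := by linarith
  have hs := hasSum_pow_div_log_of_abs_lt_one (x := 1 - t) (abs_lt.2 ⟨by linarith, by linarith⟩)
  have h := sum_le_hasSum (range 2) (fun n _ => by positivity) hs
  norm_num [sum_range_succ] at h
  linarith

end Real

theorem weak_cost_integrand_le {t : ℝ} (ht : 0 < t) :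
    t * max (1 - t⁻¹) 0 ^ 2 + max (1 - t) 0 ^ 2 ≤ 2 * (t - 1 - Real.log t) := by
  rcases le_total 1 t with h | h
  · have hinv : t⁻¹ ≤ 1 := inv_le_one_of_one_le₀ h
    rw [max_eq_left (by linarith), max_eq_right (by linarith)]
    have hsq : t * (1 - t⁻¹) ^ 2 = t - 2 + t⁻¹ := by field_simp; ring
    linarith [Real.two_mul_log_le_sub_inv h]
  · have hinv : 1 ≤ t⁻¹ := one_le_inv₀ ht |>.2 h
    rw [max_eq_right (by linarith), max_eq_left (by linarith)]
    linarith [Real.log_le_sub_one_sub_sq_div_two_s17 ht h]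

section WeakTransport

variable {V : Type*} [Fintype V] (f μ : V → ℝ)

theorem weakT_self_mul :
    weakT μ (fun x => f x * μ x) = ∑ x, f x * max (1 - (f x)⁻¹) 0 ^ 2 * μ x := by
  refine sum_congr rfl fun x _ => ?_
  dsimp only
  rcases eq_or_ne (f x * μ x) 0 with h | h
  · rw [h, mul_zero, mul_right_comm, h, zero_mul]
  · rw [div_mul_cancel_right₀ (right_ne_zero_of_mul h)]; ring

theorem weakT_mul_self :
    weakT (fun x => f x * μ x) μ = ∑ x, max (1 - f x) 0 ^ 2 * μ x := by
  refine sum_congr rfl fun x _ => ?_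
  rcases eq_or_ne (μ x) 0 with h | h
  · simp [h]
  · rw [mul_div_cancel_right₀ _ h]

end WeakTransport

theorem half_sum_sum_sub_mul_sub {V : Type*} [Fintype V] (g h μ : V → ℝ) :
    (1 / 2) * ∑ x, ∑ y, (g y - g x) * (h y - h x) * μ x * μ y =
      (∑ x, μ x) * ∑ x, g x * h x * μ x - (∑ x, g x * μ x) * ∑ x, h x * μ x := by
  have hexpand : ∑ x, ∑ y, (g y - g x) * (h y - h x) * μ x * μ y =
      (∑ x, μ x) * (∑ y, g y * h y * μ y) + (∑ x, g x * h x * μ x) * (∑ y, μ y)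
        - (∑ x, g x * μ x) * (∑ y, h y * μ y) - (∑ x, h x * μ x) * (∑ y, g y * μ y) := by
    simp only [sum_mul_sum, ← sum_sub_distrib, ← sum_add_distrib]
    exact sum_congr rfl fun x _ => sum_congr rfl fun y _ => by ring
  rw [hexpand]
  ring

theorem hwi_complete_graph_weighted {V : Type*} [Fintype V] (μ f : V → ℝ)
    (hμ : ∀ x, 0 ≤ μ x) (hμ_sum : ∑ x, μ x = 1) (hf : ∀ x, 0 < f x)
    (hf_sum : ∑ x, f x * μ x = 1) :
    ∑ x, f x * Real.log (f x) * μ x ≤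
      (1 / 2) * ∑ x, ∑ y, (f y - f x) * (Real.log (f y) - Real.log (f x)) * μ x * μ y
        - (1 / 2) * (weakT μ (fun x => f x * μ x) + weakT (fun x => f x * μ x) μ) := by
  have hcost : weakT μ (fun x => f x * μ x) + weakT (fun x => f x * μ x) μ ≤
      ∑ x, 2 * (f x - 1 - Real.log (f x)) * μ x := by
    rw [weakT_self_mul, weakT_mul_self, ← sum_add_distrib]
    refine sum_le_sum fun x _ => ?_
    have := mul_le_mul_of_nonneg_right (weak_cost_integrand_le (hf x)) (hμ x)
    linarith
  have hsplit : ∑ x, 2 * (f x - 1 - Real.log (f x)) * μ x =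
      2 * ∑ x, f x * μ x - 2 * ∑ x, μ x - 2 * ∑ x, Real.log (f x) * μ x := by
    simp only [mul_sum, ← sum_sub_distrib]
    exact sum_congr rfl fun x _ => by ring
  rw [half_sum_sum_sub_mul_sub, hμ_sum, hf_sum]
  rw [hsplit, hμ_sum, hf_sum] at hcost
  linarith

/-- HWI type inequality on the complete graph `K_n` with uniform measure
`μ ≡ 1/n`: for a positive density `f`,
`Ent_μ(f) ≤ E_μ(f, log f) − ½(T̃₂(μ|fμ) + T̃₂(fμ|μ))`, where
`E_μ(f, log f) = ½ ∑_{x,y} (f(y)−f(x))(log f(y)−log f(x)) μ(x)μ(y)`. -/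
theorem hwi_complete_graph (n : ℕ) (hn : 1 ≤ n)
    (f : Fin n → ℝ) (hf_pos : ∀ x, 0 < f x)
    (hf_sum : ∑ x, f x * ((1 : ℝ) / n) = 1) :
    ∑ x, f x * Real.log (f x) * ((1 : ℝ) / n) ≤
      (1 / 2) * ∑ x, ∑ y,
          (f y - f x) * (Real.log (f y) - Real.log (f x)) * ((1 : ℝ) / n) * ((1 : ℝ) / n)
        - (1 / 2) * (weakT (fun _ => (1 : ℝ) / n) (fun x => f x * ((1 : ℝ) / n)) +
            weakT (fun x => f x * ((1 : ℝ) / n)) (fun _ => (1 : ℝ) / n)) := by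
  have huniform : ∑ _x : Fin n, (1 : ℝ) / n = 1 := by
    rw [sum_const, card_univ, Fintype.card_fin, nsmul_eq_mul, mul_one_div_cancel]
    exact_mod_cast (Nat.one_le_iff_ne_zero.mp hn)
  exact hwi_complete_graph_weighted (fun _ => (1 : ℝ) / n) f (fun _ => by positivity)
    huniform hf_pos hf_sum
end
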